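/- arXiv:1903.11310 — 2 statements merged into one kernel-verified Lean document; each statement's English description precedes it below -/
import Mathlib

section
/- Let w : ℝ → (0,∞) be continuous and bounded, and let x ∈ L²_w(ℝ) be such that w·x is locally absolutely continuous on ℝ and its almost-everywhere derivative (w·x)′ belongs to L²_w(ℝ). Then w·x vanishes at infinity: lim_{ξ→+∞} (w·x)(ξ) = 0 and lim_{ξ→−∞} (w·x)(ξ) = 0. -/
open MeasureTheory Filter Set Topology

/-!
Put `u = w·x`. Its squared modulus `‖u‖² = w²|x|² ≤ M w|x|²`, where `M` bounds `w`, is integrable,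
and, `u` being a primitive of `g`, `‖u‖²` is absolutely continuous with derivative `2⟪u, g⟫` a.e. Since
`2|⟪u, g⟫| ≤ 2w|x||g| ≤ w|x|² + w|g|²`, this derivative is integrable too, so `‖u‖²` has limits
at `±∞`; an integrable function can only have the limit `0` there.
-/

theorem volume_eq_top_of_mem_atTop {s : Set ℝ} (hs : s ∈ atTop) : volume s = ⊤ := by
  obtain ⟨b, hb⟩ := mem_atTop_sets.1 hs
  rw [← top_le_iff, ← Real.volume_Ici (a := b)]
  exact measure_mono hb

theorem volume_eq_top_of_mem_atBot {s : Set ℝ} (hs : s ∈ atBot) : volume s = ⊤ := by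
  obtain ⟨b, hb⟩ := mem_atBot_sets.1 hs
  rw [← top_le_iff, ← Real.volume_Iic (a := b)]
  exact measure_mono hb

section Primitive

variable {E : Type*} [NormedAddCommGroup E] [NormedSpace ℝ E] {f f' : ℝ → E}

theorem ae_hasDerivAt_of_sub_eq_integral [CompleteSpace E] (hf' : LocallyIntegrable f')
    (hf : ∀ a b, f b - f a = ∫ t in a..b, f' t) : ∀ᵐ t, HasDerivAt f (f' t) t := by
  have hf_eq : f = fun t => f 0 + ∫ s in (0 : ℝ)..t, f' s := by
    funext t
    rw [← hf 0 t, add_sub_cancel]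
  filter_upwards [LocallyIntegrable.ae_hasDerivAt_integral hf'] with t ht
  rw [hf_eq]
  exact (ht 0).const_add _

theorem tendsto_atTop_of_sub_eq_integral (hf' : Integrable f')
    (hf : ∀ a b, f b - f a = ∫ t in a..b, f' t) :
    Tendsto f atTop (𝓝 (f 0 + ∫ t in Ioi 0, f' t)) := by
  refine (tendsto_const_nhds.add
    (intervalIntegral_tendsto_integral_Ioi 0 hf'.integrableOn tendsto_id)).congr fun t => ?_
  rw [id, ← hf 0 t, add_sub_cancel]

theorem tendsto_atBot_of_sub_eq_integral (hf' : Integrable f')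
    (hf : ∀ a b, f b - f a = ∫ t in a..b, f' t) :
    Tendsto f atBot (𝓝 (f 0 - ∫ t in Iic 0, f' t)) := by
  refine (tendsto_const_nhds.sub
    (intervalIntegral_tendsto_integral_Iic 0 hf'.integrableOn tendsto_id)).congr fun t => ?_
  rw [id, ← hf t 0, sub_sub_cancel]

theorem tendsto_zero_of_integrable_of_sub_eq_integral (hf : Integrable f) (hf' : Integrable f')
    (hFTC : ∀ a b, f b - f a = ∫ t in a..b, f' t) :
    Tendsto f atTop (𝓝 0) ∧ Tendsto f atBot (𝓝 0) := by
  have htop := tendsto_atTop_of_sub_eq_integral hf' hFTC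
  have hbot := tendsto_atBot_of_sub_eq_integral hf' hFTC
  rw [(hf.integrableAtFilter atTop).eq_zero_of_tendsto
    (fun _ => volume_eq_top_of_mem_atTop) htop] at htop
  rw [(hf.integrableAtFilter atBot).eq_zero_of_tendsto
    (fun _ => volume_eq_top_of_mem_atBot) hbot] at hbot
  exact ⟨htop, hbot⟩

end Primitive

theorem absolutelyContinuousOnInterval_of_sub_eq_integral {f f' : ℝ → ℝ} {a b : ℝ}
    (hf' : IntervalIntegrable f' volume a b) (hf : ∀ t, f t - f a = ∫ s in a..t, f' s) :
    AbsolutelyContinuousOnInterval f a b := by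
  have hf_eq : f = fun t => f a + ∫ s in a..t, f' s := by
    funext t
    rw [← hf t, add_sub_cancel]
  rw [hf_eq]
  exact (LipschitzWith.const (f a)).lipschitzOnWith.absolutelyContinuousOnInterval.add
    (hf'.absolutelyContinuousOnInterval_intervalIntegral left_mem_uIcc)

theorem sq_norm_sub_sq_norm_eq_integral_inner {u g : ℝ → ℂ} (hg : LocallyIntegrable g)
    (hu : ∀ a b, u b - u a = ∫ t in a..b, g t) (a b : ℝ) :
    ‖u b‖ ^ 2 - ‖u a‖ ^ 2 = ∫ t in a..b, 2 * inner ℝ (u t) (g t) := by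
  have hgi : ∀ c, IntervalIntegrable g volume a c := fun c =>
    (hg.integrableOn_isCompact isCompact_uIcc).intervalIntegrable
  have hre : AbsolutelyContinuousOnInterval (fun t => (u t).re) a b :=
    absolutelyContinuousOnInterval_of_sub_eq_integral (f' := fun t => (g t).re)
      ⟨(hgi b).1.re, (hgi b).2.re⟩ fun t => by
        rw [← Complex.sub_re, hu]
        exact (Complex.reCLM.intervalIntegral_comp_comm (hgi t)).symm
  have him : AbsolutelyContinuousOnInterval (fun t => (u t).im) a b :=
    absolutelyContinuousOnInterval_of_sub_eq_integral (f' := fun t => (g t).im)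
      ⟨(hgi b).1.im, (hgi b).2.im⟩ fun t => by
        rw [← Complex.sub_im, hu]
        exact (Complex.imCLM.intervalIntegral_comp_comm (hgi t)).symm
  have hsq : AbsolutelyContinuousOnInterval (fun t => ‖u t‖ ^ 2) a b := by
    have h_eq : (fun t => ‖u t‖ ^ 2) =
        (fun t => (u t).re * (u t).re) + fun t => (u t).im * (u t).im := by
      funext t
      rw [Complex.sq_norm, Complex.normSq_apply, Pi.add_apply]
    rw [h_eq]
    exact (hre.fun_mul hre).add (him.fun_mul him)
  rw [← hsq.integral_deriv_eq_sub]
  refine intervalIntegral.integral_congr_ae ?_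
  filter_upwards [ae_hasDerivAt_of_sub_eq_integral hg hu] with t ht _
  exact ht.norm_sq.deriv

theorem tendsto_zero_of_tendsto_sq_norm {α E : Type*} [SeminormedAddCommGroup E] {l : Filter α}
    {f : α → E} (h : Tendsto (fun a => ‖f a‖ ^ 2) l (𝓝 0)) : Tendsto f l (𝓝 0) := by
  rw [tendsto_zero_iff_norm_tendsto_zero]
  simpa only [Real.sqrt_sq (norm_nonneg _), Real.sqrt_zero] using h.sqrt

/-- If `w` is moreover bounded, then `w·x` vanishes at `±∞`. -/
theorem stmt_2 (w : ℝ → ℝ) (hw_cont : Continuous w) (hw_pos : ∀ ξ, 0 < w ξ)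
    (hw_bdd : ∃ M : ℝ, ∀ ξ : ℝ, w ξ ≤ M)
    (x g : ℝ → ℂ)
    (hx_meas : AEStronglyMeasurable x volume)
    (hx : Integrable fun ξ => w ξ * ‖x ξ‖ ^ 2)
    (hg_loc : LocallyIntegrable g)
    (hg : Integrable fun ξ => w ξ * ‖g ξ‖ ^ 2)
    (hFTC : ∀ a b : ℝ, (w b : ℂ) * x b - (w a : ℂ) * x a = ∫ ζ in a..b, g ζ) :
    Tendsto (fun ξ : ℝ => (w ξ : ℂ) * x ξ) atTop (𝓝 0) ∧
    Tendsto (fun ξ : ℝ => (w ξ : ℂ) * x ξ) atBot (𝓝 0) := by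
  obtain ⟨M, hM⟩ := hw_bdd
  set u : ℝ → ℂ := fun ξ => (w ξ : ℂ) * x ξ
  have hu_meas : AEStronglyMeasurable u volume :=
    (Complex.continuous_ofReal.comp hw_cont).aestronglyMeasurable.mul hx_meas
  have hu_norm (ξ : ℝ) : ‖u ξ‖ = w ξ * ‖x ξ‖ := by
    rw [norm_mul, Complex.norm_real, Real.norm_of_nonneg (hw_pos ξ).le]
  have hF : Integrable fun ξ => ‖u ξ‖ ^ 2 := by
    refine (hx.const_mul M).mono' (hu_meas.norm.pow 2) (ae_of_all _ fun ξ => ?_)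
    rw [norm_pow, norm_norm, hu_norm, mul_pow, sq (w ξ), mul_assoc]
    exact mul_le_mul_of_nonneg_right (hM ξ) (mul_nonneg (hw_pos ξ).le (sq_nonneg _))
  have hD : Integrable fun ξ => 2 * inner ℝ (u ξ) (g ξ) := by
    refine (hx.add hg).mono' ((hu_meas.inner hg_loc.aestronglyMeasurable).const_mul 2)
      (ae_of_all _ fun ξ => ?_)
    have h_inner := abs_real_inner_le_norm (u ξ) (g ξ)
    rw [hu_norm] at h_inner
    rw [norm_mul, Real.norm_two, Real.norm_eq_abs, Pi.add_apply]
    nlinarith [mul_nonneg (hw_pos ξ).le (sq_nonneg (‖x ξ‖ - ‖g ξ‖))]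
  obtain ⟨htop, hbot⟩ := tendsto_zero_of_integrable_of_sub_eq_integral hF hD
    (sq_norm_sub_sq_norm_eq_integral_inner hg_loc hFTC)
  exact ⟨tendsto_zero_of_tendsto_sq_norm htop, tendsto_zero_of_tendsto_sq_norm hbot⟩
end

section
/- Let w : ℝ → (0,∞) be continuous with 1/w not Lebesgue-integrable on (−∞,0) and not Lebesgue-integrable on (0,∞). Then for every t ∈ ℝ the map T_w(t) given by (T_w(t)x)(ξ) = (w(ξ+μ_w(ξ,t))/w(ξ))·x(ξ+μ_w(ξ,t)) is a well-defined linear map of L²_w(ℝ) into itself and is isometric: ‖T_w(t)x‖_{L²_w(ℝ)} = ‖x‖_{L²_w(ℝ)} for all x ∈ L²_w(ℝ). -/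
/-!
The two non-integrability hypotheses make `p_w` an increasing `C¹` bijection of `ℝ` with
derivative `1 / w`, so `φ ξ = ξ + μ_w(ξ, t) = p_w⁻¹(p_w ξ + t)` is a diffeomorphism of `ℝ` with
inverse `ξ ↦ ξ + μ_w(ξ, -t)` and derivative `φ' = (w ∘ φ) / w`. Then
`w ξ ‖(T_w(t) x) ξ‖² = φ' ξ · w (φ ξ) ‖x (φ ξ)‖²`, and the isometry is the change of variables
formula for `φ`.
-/

open MeasureTheory Filter Set Topology

/-- `p_w(ξ) = ∫₀^ξ w(ζ)⁻¹ dζ`. -/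
noncomputable def pW (w : ℝ → ℝ) (ξ : ℝ) : ℝ := ∫ ζ in (0:ℝ)..ξ, (w ζ)⁻¹

/-- `μ_w(ξ,t) = p_w⁻¹(p_w(ξ) + t) − ξ`. -/
noncomputable def muW (w : ℝ → ℝ) (ξ t : ℝ) : ℝ :=
  Function.invFun (pW w) (pW w ξ + t) - ξ

/-- `(T_w(t)x)(ξ) = (w(ξ+μ_w(ξ,t))/w(ξ)) · x(ξ+μ_w(ξ,t))`. -/
noncomputable def Tw (w : ℝ → ℝ) (t : ℝ) (x : ℝ → ℂ) (ξ : ℝ) : ℂ :=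
  ((w (ξ + muW w ξ t) / w ξ : ℝ) : ℂ) * x (ξ + muW w ξ t)

open Function

section Primitive

variable {f : ℝ → ℝ} {a : ℝ}

theorem MeasureTheory.LocallyIntegrable.intervalIntegrable (hf : LocallyIntegrable f) (b c : ℝ) :
    IntervalIntegrable f volume b c :=
  (hf.integrableOn_isCompact isCompact_uIcc).intervalIntegrable

theorem monotone_intervalIntegral_of_nonneg (hf : LocallyIntegrable f) (hf0 : ∀ x, 0 ≤ f x) :
    Monotone fun x => ∫ t in a..x, f t := by
  intro x y hxy
  dsimp only
  rw [← intervalIntegral.integral_add_adjacent_intervals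
    (hf.intervalIntegrable a x) (hf.intervalIntegrable x y)]
  exact le_add_of_nonneg_right (intervalIntegral.integral_nonneg hxy fun t _ => hf0 t)

theorem tendsto_intervalIntegral_atTop_of_not_integrableOn_Ioi (hf : LocallyIntegrable f)
    (hf0 : ∀ x, 0 ≤ f x) (h : ¬ IntegrableOn f (Ioi a)) :
    Tendsto (fun x => ∫ t in a..x, f t) atTop atTop := by
  refine tendsto_atTop_atTop_of_monotone' (monotone_intervalIntegral_of_nonneg hf hf0) ?_
  rintro ⟨M, hM⟩
  have hnorm : (fun t => ‖f t‖) = f := funext fun t => Real.norm_of_nonneg (hf0 t)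
  refine h (integrableOn_Ioi_of_intervalIntegral_norm_bounded M a
    (fun b => (hf.intervalIntegrable a b).1) tendsto_id (Eventually.of_forall fun b => ?_))
  rw [hnorm]
  exact hM (mem_range_self b)

theorem tendsto_intervalIntegral_atBot_of_not_integrableOn_Iio (hf : LocallyIntegrable f)
    (hf0 : ∀ x, 0 ≤ f x) (h : ¬ IntegrableOn f (Iio a)) :
    Tendsto (fun x => ∫ t in a..x, f t) atBot atBot := by
  refine tendsto_atBot_atBot_of_monotone' (monotone_intervalIntegral_of_nonneg hf hf0) ?_
  rintro ⟨m, hm⟩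
  have hnorm : (fun t => ‖f t‖) = f := funext fun t => Real.norm_of_nonneg (hf0 t)
  refine h (integrableOn_Iic_of_intervalIntegral_norm_bounded (-m) a
    (fun b => (hf.intervalIntegrable b a).1) tendsto_id (Eventually.of_forall fun b => ?_)
    |>.mono_set Iio_subset_Iic_self)
  rw [hnorm, intervalIntegral.integral_symm, neg_le_neg_iff]
  exact hm (mem_range_self b)

end Primitive

theorem StrictMono.continuous_invFun {α β : Type*} [LinearOrder α] [TopologicalSpace α]
    [OrderTopology α] [DenselyOrdered α] [Nonempty α] [LinearOrder β] [TopologicalSpace β]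
    [OrderTopology β] {f : α → β} (hf : StrictMono f) (hsurj : Surjective f) :
    Continuous (invFun f) := by
  refine Monotone.continuous_of_surjective (fun y y' hyy' => ?_)
    fun x => ⟨f x, leftInverse_invFun hf.injective x⟩
  rwa [← hf.le_iff_le, rightInverse_invFun hsurj y, rightInverse_invFun hsurj y']

theorem StrictMono.hasDerivAt_invFun {f : ℝ → ℝ} {f' y : ℝ} (hf : StrictMono f)
    (hsurj : Surjective f) (hderiv : HasDerivAt f f' (invFun f y)) (hf' : f' ≠ 0) :
    HasDerivAt (invFun f) f'⁻¹ y :=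
  hderiv.of_local_left_inverse (hf.continuous_invFun hsurj).continuousAt hf'
    (Eventually.of_forall (rightInverse_invFun hsurj))

theorem quasiMeasurePreserving_of_differentiable_leftInverse {E : Type*} [NormedAddCommGroup E]
    [NormedSpace ℝ E] [FiniteDimensional ℝ E] [MeasurableSpace E] [BorelSpace E]
    (μ : Measure E) [μ.IsAddHaarMeasure] {φ ψ : E → E} (hφ : Measurable φ)
    (hψ : Differentiable ℝ ψ) (h : LeftInverse ψ φ) :
    Measure.QuasiMeasurePreserving φ μ μ := by
  refine ⟨hφ, Measure.AbsolutelyContinuous.mk fun s hs h0 => ?_⟩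
  rw [Measure.map_apply hφ hs]
  exact measure_mono_null (show φ ⁻¹' s ⊆ ψ '' s from fun x hx => ⟨φ x, hx, h x⟩)
    (addHaar_image_eq_zero_of_differentiableOn_of_addHaar_eq_zero μ hψ.differentiableOn h0)

section ChangeOfVariables

variable {F : Type*} [NormedAddCommGroup F] [NormedSpace ℝ F] {φ φ' : ℝ → ℝ}

theorem integrable_abs_deriv_smul_comp_iff (hφ : Bijective φ)
    (hderiv : ∀ x, HasDerivAt φ (φ' x) x) (g : ℝ → F) :
    Integrable (fun x => |φ' x| • g (φ x)) ↔ Integrable g := by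
  have := integrableOn_image_iff_integrableOn_abs_deriv_smul MeasurableSet.univ
    (fun x _ => (hderiv x).hasDerivWithinAt) hφ.injective.injOn g
  rwa [image_univ, hφ.surjective.range_eq, integrableOn_univ, integrableOn_univ, Iff.comm] at this

theorem integral_abs_deriv_smul_comp (hφ : Bijective φ) (hderiv : ∀ x, HasDerivAt φ (φ' x) x)
    (g : ℝ → F) : ∫ x, |φ' x| • g (φ x) = ∫ x, g x := by
  have := integral_image_eq_integral_abs_deriv_smul MeasurableSet.univ
    (fun x _ => (hderiv x).hasDerivWithinAt) hφ.injective.injOn g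
  rw [image_univ, hφ.surjective.range_eq, Measure.restrict_univ] at this
  exact this.symm

end ChangeOfVariables

section Weight

variable {w : ℝ → ℝ}

theorem hasDerivAt_pW (hw : Continuous w) (hw_pos : ∀ ξ, 0 < w ξ) (ξ : ℝ) :
    HasDerivAt (pW w) (w ξ)⁻¹ ξ :=
  have hinv : Continuous fun ζ => (w ζ)⁻¹ := hw.inv₀ fun ζ => (hw_pos ζ).ne'
  intervalIntegral.integral_hasDerivAt_right (hinv.intervalIntegrable _ _)
    (hinv.stronglyMeasurableAtFilter _ _) hinv.continuousAt

theorem strictMono_pW (hw : Continuous w) (hw_pos : ∀ ξ, 0 < w ξ) : StrictMono (pW w) :=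
  strictMono_of_hasDerivAt_pos (hasDerivAt_pW hw hw_pos) fun ξ => inv_pos.2 (hw_pos ξ)

theorem surjective_pW (hw : Continuous w) (hw_pos : ∀ ξ, 0 < w ξ)
    (hni_neg : ¬ IntegrableOn (fun ζ => (w ζ)⁻¹) (Iio 0))
    (hni_pos : ¬ IntegrableOn (fun ζ => (w ζ)⁻¹) (Ioi 0)) : Surjective (pW w) := by
  have hinv : LocallyIntegrable fun ζ => (w ζ)⁻¹ :=
    (hw.inv₀ fun ζ => (hw_pos ζ).ne').locallyIntegrable
  have hinv0 : ∀ ζ, 0 ≤ (w ζ)⁻¹ := fun ζ => (inv_pos.2 (hw_pos ζ)).le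
  exact Continuous.surjective
    (continuous_iff_continuousAt.2 fun ξ => (hasDerivAt_pW hw hw_pos ξ).continuousAt)
    (tendsto_intervalIntegral_atTop_of_not_integrableOn_Ioi hinv hinv0 hni_pos)
    (tendsto_intervalIntegral_atBot_of_not_integrableOn_Iio hinv hinv0 hni_neg)

theorem add_muW (w : ℝ → ℝ) (ξ t : ℝ) : ξ + muW w ξ t = invFun (pW w) (pW w ξ + t) :=
  add_sub_cancel ξ _

theorem hasDerivAt_add_muW (hw : Continuous w) (hw_pos : ∀ ξ, 0 < w ξ) (hsurj : Surjective (pW w))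
    (t ξ : ℝ) : HasDerivAt (fun ξ => ξ + muW w ξ t) (w (ξ + muW w ξ t) / w ξ) ξ := by
  have hinvFun : HasDerivAt (invFun (pW w)) (w (ξ + muW w ξ t)) (pW w ξ + t) := by
    simpa only [add_muW, inv_inv] using (strictMono_pW hw hw_pos).hasDerivAt_invFun hsurj
      (hasDerivAt_pW hw hw_pos _) (inv_ne_zero (hw_pos _).ne')
  simpa only [add_muW, div_eq_mul_inv, comp_def] using hinvFun.comp ξ ((hasDerivAt_pW hw hw_pos ξ).add_const t)

theorem leftInverse_add_muW_neg (hinj : Injective (pW w)) (hsurj : Surjective (pW w)) (t : ℝ) :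
    LeftInverse (fun ξ => ξ + muW w ξ (-t)) (fun ξ => ξ + muW w ξ t) := fun ξ => by
  simp only [add_muW, rightInverse_invFun hsurj _, add_neg_cancel_right, leftInverse_invFun hinj ξ]

theorem bijective_add_muW (hinj : Injective (pW w)) (hsurj : Surjective (pW w)) (t : ℝ) :
    Bijective fun ξ => ξ + muW w ξ t :=
  bijective_iff_has_inverse.2 ⟨_, leftInverse_add_muW_neg hinj hsurj t,
    by simpa only [neg_neg] using (leftInverse_add_muW_neg hinj hsurj (-t)).rightInverse⟩

theorem Tw_add_smul (w : ℝ → ℝ) (t : ℝ) (x y : ℝ → ℂ) (c : ℂ) (ξ : ℝ) :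
    Tw w t (fun ζ => x ζ + c • y ζ) ξ = Tw w t x ξ + c • Tw w t y ξ := by
  simp only [Tw, smul_eq_mul]
  ring

theorem weight_mul_norm_Tw_sq (hw_pos : ∀ ξ, 0 < w ξ) (t : ℝ) (x : ℝ → ℂ) (ξ : ℝ) :
    w ξ * ‖Tw w t x ξ‖ ^ 2 =
      |w (ξ + muW w ξ t) / w ξ| • (w (ξ + muW w ξ t) * ‖x (ξ + muW w ξ t)‖ ^ 2) := by
  have hratio : 0 < w (ξ + muW w ξ t) / w ξ := div_pos (hw_pos _) (hw_pos ξ)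
  rw [Tw, norm_mul, Complex.norm_real, Real.norm_of_nonneg hratio.le, abs_of_pos hratio,
    smul_eq_mul]
  field_simp [(hw_pos ξ).ne']

theorem aestronglyMeasurable_Tw (hw : Continuous w) (hw_pos : ∀ ξ, 0 < w ξ)
    (hinj : Injective (pW w)) (hsurj : Surjective (pW w)) (t : ℝ) {x : ℝ → ℂ}
    (hx : AEStronglyMeasurable x) : AEStronglyMeasurable (Tw w t x) := by
  have hdiff : ∀ s, Differentiable ℝ fun ξ => ξ + muW w ξ s := fun s ξ =>
    (hasDerivAt_add_muW hw hw_pos hsurj s ξ).differentiableAt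
  have hφ : Continuous fun ξ => ξ + muW w ξ t := (hdiff t).continuous
  have hqmp := quasiMeasurePreserving_of_differentiable_leftInverse volume hφ.measurable
    (hdiff (-t)) (leftInverse_add_muW_neg hinj hsurj t)
  exact (Complex.continuous_ofReal.comp ((hw.comp hφ).div hw fun ξ => (hw_pos ξ).ne'))
    |>.aestronglyMeasurable.mul (hx.comp_quasiMeasurePreserving hqmp)

end Weight

theorem stmt_10 (w : ℝ → ℝ) (hw_cont : Continuous w) (hw_pos : ∀ ξ, 0 < w ξ)
    (hni_neg : ¬ IntegrableOn (fun ζ => (w ζ)⁻¹) (Set.Iio 0))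
    (hni_pos : ¬ IntegrableOn (fun ζ => (w ζ)⁻¹) (Set.Ioi 0)) (t : ℝ) :
    (∀ x y : ℝ → ℂ, ∀ c : ℂ, ∀ ξ : ℝ,
      Tw w t (fun ζ => x ζ + c • y ζ) ξ = Tw w t x ξ + c • Tw w t y ξ) ∧
    ∀ x : ℝ → ℂ, AEStronglyMeasurable x volume →
      Integrable (fun ξ => w ξ * ‖x ξ‖ ^ 2) →
      AEStronglyMeasurable (Tw w t x) volume ∧
      Integrable (fun ξ => w ξ * ‖Tw w t x ξ‖ ^ 2) ∧
      (∫ ξ, w ξ * ‖Tw w t x ξ‖ ^ 2) = ∫ ξ, w ξ * ‖x ξ‖ ^ 2 := by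
  have hinj := (strictMono_pW hw_cont hw_pos).injective
  have hsurj := surjective_pW hw_cont hw_pos hni_neg hni_pos
  have hbij := bijective_add_muW hinj hsurj t
  have hderiv := hasDerivAt_add_muW hw_cont hw_pos hsurj t
  refine ⟨Tw_add_smul w t, fun x hx hx2 =>
    ⟨aestronglyMeasurable_Tw hw_cont hw_pos hinj hsurj t hx, ?_, ?_⟩⟩
  · simpa only [weight_mul_norm_Tw_sq hw_pos] using
      (integrable_abs_deriv_smul_comp_iff hbij hderiv fun ξ => w ξ * ‖x ξ‖ ^ 2).2 hx2
  · simpa only [weight_mul_norm_Tw_sq hw_pos] using integral_abs_deriv_smul_comp hbij hderiv fun ξ => w ξ * ‖x ξ‖ ^ 2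
end
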